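/- arXiv:0910.4792 — 3 statements merged into one kernel-verified Lean document; each statement's English description precedes it below -/
import Mathlib

section
/- Let k be a line in CP^2 and p a point not on k; define reflection over k by harmonic conjugation with respect to p and k. Suppose y, y' are reflections of each other and z, z' are reflections of each other, with the lines yz and y'z' distinct. Then the intersection point yz ∩ y'z' lies on k. -/
open Submodule

/-- `HarmConj p a m b` : `cr(p, a, m, b) = -1`, i.e. `p` and `m` are harmonic conjugates
with respect to `a` and `b` (points of `CP²` represented by nonzero vectors of `ℂ³`). -/
def HarmConj (p a m b : Fin 3 → ℂ) : Prop :=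
  ∃ α β s t : ℂ, α ≠ 0 ∧ β ≠ 0 ∧ s ≠ 0 ∧ t ≠ 0 ∧
    s • m = α • a + β • b ∧ t • p = α • a - β • b

/-- `IsReflection p k y y'` : `y'` is the reflection of `y` over the line `k` with
centre `p`: `y'` lies on line `py` and `cr(p, y, n, y') = -1` where `n = k ∩ py`. -/
def IsReflection (p : Fin 3 → ℂ) (k : Submodule ℂ (Fin 3 → ℂ)) (y y' : Fin 3 → ℂ) : Prop :=
  ∃ n : Fin 3 → ℂ, n ≠ 0 ∧ n ∈ k ∧ HarmConj p y n y'

/-- **Reflected lines meet on `k`.**  Let `k` be a line of `CP²` and `p ∉ k`.  If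
`y, y'` are reflections of each other over `k`, and likewise `z, z'`, with `p, y, z`
not collinear and the lines `yz` and `y'z'` distinct, then `yz ∩ y'z'` lies on `k`. -/
theorem reflected_lines_meet_on_k
    (k₁ k₂ p y y' z z' w : Fin 3 → ℂ)
    (hk : LinearIndependent ℂ ![k₁, k₂])
    (hp : p ∉ span ℂ ({k₁, k₂} : Set (Fin 3 → ℂ)))
    (hnd : LinearIndependent ℂ ![p, y, z])
    (hy : IsReflection p (span ℂ ({k₁, k₂} : Set (Fin 3 → ℂ))) y y')
    (hz : IsReflection p (span ℂ ({k₁, k₂} : Set (Fin 3 → ℂ))) z z')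
    (hlines : span ℂ ({y, z} : Set (Fin 3 → ℂ)) ≠ span ℂ ({y', z'} : Set (Fin 3 → ℂ)))
    (hw0 : w ≠ 0)
    (hw1 : w ∈ span ℂ ({y, z} : Set (Fin 3 → ℂ)))
    (hw2 : w ∈ span ℂ ({y', z'} : Set (Fin 3 → ℂ))) :
    w ∈ span ℂ ({k₁, k₂} : Set (Fin 3 → ℂ)) := by
  obtain ⟨n₁, hn₁0, hn₁k, α, β, s, t, hα, hβ, hs, ht, h1, h2⟩ := hy
  obtain ⟨n₂, hn₂0, hn₂k, α', β', s', t', hα', hβ', hs', ht', h3, h4⟩ := hz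
  obtain ⟨a, b, h5⟩ := Submodule.mem_span_pair.mp hw1
  obtain ⟨c, d, h6⟩ := Submodule.mem_span_pair.mp hw2
  have h0 : (c*β'*t + d*β*t') • p + (β*β'*a - c*β'*α) • y + (β*β'*b - d*β*α') • z = 0 := by
    linear_combination (norm := module) (β*β') • h5 - (β*β') • h6 + (c*β') • h2 + (d*β) • h4
  have hind := Fintype.linearIndependent_iff.mp hnd
    ![c*β'*t + d*β*t', β*β'*a - c*β'*α, β*β'*b - d*β*α']
    (by simpa [Fin.sum_univ_three] using h0)
  have e1 : β*β'*a - c*β'*α = 0 := hind 1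
  have e2 : β*β'*b - d*β*α' = 0 := hind 2
  have e1y : (β*β'*a) • y = (c*β'*α) • y := by rw [sub_eq_zero] at e1; rw [e1]
  have e2z : (β*β'*b) • z = (d*β*α') • z := by rw [sub_eq_zero] at e2; rw [e2]
  have key : (2*β*β') • w = (c*β'*s) • n₁ + (d*β*s') • n₂ := by
    linear_combination (norm := module)
      - ((c*β') • h1) - (d*β) • h3 - (β*β') • h5 - (β*β') • h6 + e1y + e2z
  have hmem : (2*β*β') • w ∈ span ℂ ({k₁, k₂} : Set (Fin 3 → ℂ)) := by
    rw [key]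
    exact add_mem (smul_mem _ _ hn₁k) (smul_mem _ _ hn₂k)
  have h2ββ' : (2*β*β') ≠ 0 := by
    simp [hβ, hβ']
  have := smul_mem (span ℂ ({k₁, k₂} : Set (Fin 3 → ℂ))) (2*β*β')⁻¹ hmem
  rwa [smul_smul, inv_mul_cancel₀ h2ββ', one_smul] at this
end

section
/- Let C be a smooth conic in CP^2, let k be a chord of C containing distinct points u, v of C, and let p be the pole of k. Let m be a point on k, and let rs be a chord of C passing through m (r, s ∈ C). Let r' be the reflection of r over k (harmonic conjugation with respect to p and k). Then the point x = r'v ∩ su lies on the line pm. -/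
open Submodule

/-- **Key lemma for the butterfly theorem.**  Let `C` be a smooth conic in `CP²`, `k`
the chord through distinct points `u, v` of `C`, and `p` the pole of `k`.  Let `m` be a
point of `k`, let `rs` be a chord of `C` through `m`, and let `r'` be the reflection of
`r` over `k`.  Then `x = r'v ∩ su` lies on the line `pm`. -/
theorem key_lemma_butterfly
    (B : (Fin 3 → ℂ) →ₗ[ℂ] (Fin 3 → ℂ) →ₗ[ℂ] ℂ)
    (hsymm : ∀ x y, B x y = B y x)
    (hnd : ∀ x, (∀ y, B x y = 0) → x = 0)
    (u v p m r s r' x : Fin 3 → ℂ)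
    (hu : B u u = 0) (hv : B v v = 0)
    (huv : LinearIndependent ℂ ![u, v])
    (hp0 : p ≠ 0) (hpu : B u p = 0) (hpv : B v p = 0)
    (hm0 : m ≠ 0) (hmk : m ∈ span ℂ ({u, v} : Set (Fin 3 → ℂ)))
    (hmu : LinearIndependent ℂ ![m, u]) (hmv : LinearIndependent ℂ ![m, v])
    (hr : B r r = 0) (hs : B s s = 0)
    (hchord : m ∈ span ℂ ({r, s} : Set (Fin 3 → ℂ)))
    (href : IsReflection p (span ℂ ({u, v} : Set (Fin 3 → ℂ))) r r')
    -- nondegeneracy: `r, s, u, v, r'` are pairwise distinct points of `C` :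
    (hdist : ∀ i j : Fin 5, i ≠ j → LinearIndependent ℂ ![![r, s, u, v, r'] i, ![r, s, u, v, r'] j])
    (hx0 : x ≠ 0)
    (hx1 : x ∈ span ℂ ({r', v} : Set (Fin 3 → ℂ)))
    (hx2 : x ∈ span ℂ ({s, u} : Set (Fin 3 → ℂ))) :
    x ∈ span ℂ ({p, m} : Set (Fin 3 → ℂ)) := by
  classical
  have hu0 : u ≠ 0 := by
    have := huv.ne_zero 0; simpa using this
  have hv0 : v ≠ 0 := by
    have := huv.ne_zero 1; simpa using this
  -- a perpendicularity helper
  have perp : ∀ (a b c t : Fin 3 → ℂ), span ℂ ({a, b, c} : Set (Fin 3 → ℂ)) = ⊤ →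
      B t a = 0 → B t b = 0 → B t c = 0 → t = 0 := by
    intro a b c t hspan h1 h2 h3
    apply hnd
    intro y
    have hy : y ∈ span ℂ ({a, b, c} : Set (Fin 3 → ℂ)) := by rw [hspan]; trivial
    induction hy using Submodule.span_induction with
    | mem z hz =>
      rcases hz with rfl | rfl | rfl
      · exact h1
      · exact h2
      · exact h3
    | zero => simp
    | add y z _ _ hy hz => simp [map_add, hy, hz]
    | smul c y _ hy => simp [map_smul, hy]
  -- B u v ≠ 0
  have hBuv : B u v ≠ 0 := by
    intro hcontra
    -- find w outside span {u, v}
    have hrange2 : Set.range ![u, v] = {u, v} := by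
      ext y; simp [Matrix.range_cons, Matrix.range_empty]; tauto
    have hne : span ℂ ({u, v} : Set (Fin 3 → ℂ)) ≠ ⊤ := by
      intro htop
      have h2 := finrank_span_eq_card (R := ℂ) huv
      rw [hrange2, htop] at h2
      simp [finrank_top] at h2
    obtain ⟨w, hw⟩ : ∃ w, w ∉ span ℂ ({u, v} : Set (Fin 3 → ℂ)) := by
      by_contra h; push_neg at h; exact hne (eq_top_iff'.mpr h)
    have hw0 : w ≠ 0 := fun h => hw (h ▸ zero_mem _)
    -- u, v, w independent
    have hind : LinearIndependent ℂ ![u, v, w] := by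
      rw [Fintype.linearIndependent_iff]
      intro g hg
      rw [Fin.sum_univ_three] at hg
      simp only [Matrix.cons_val_zero, Matrix.cons_val_one, Matrix.head_cons,
        Matrix.cons_val_two, Matrix.tail_cons] at hg
      have hg2 : g 2 = 0 := by
        by_contra hg2
        apply hw
        rw [mem_span_pair]
        refine ⟨-(g 0) / g 2, -(g 1) / g 2, ?_⟩
        have : w = (g 2)⁻¹ • ((g 2) • w) := by
          rw [smul_smul, inv_mul_cancel₀ hg2, one_smul]
        rw [this]
        have hw' : g 2 • w = -(g 0 • u) - (g 1 • v) := by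
          linear_combination (norm := module) hg
        rw [hw']
        match_scalars <;> field_simp
      rw [hg2, zero_smul, add_zero] at hg
      have h01 := Fintype.linearIndependent_iff.mp huv ![g 0, g 1] (by
        rw [Fin.sum_univ_two]; simpa using hg)
      intro i
      fin_cases i
      · simpa using h01 0
      · simpa using h01 1
      · exact hg2
    have hspan3 : span ℂ ({u, v, w} : Set (Fin 3 → ℂ)) = ⊤ := by
      have := hind.span_eq_top_of_card_eq_finrank (by simp)
      rwa [show Set.range ![u, v, w] = {u, v, w} by
        ext y; simp [Matrix.range_cons, Matrix.range_empty]; tauto] at this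
    -- d := B v w • u - B u w • v is perp to everything
    have hd : (B v w) • u - (B u w) • v = 0 := by
      apply perp u v w _ hspan3
      · simp [map_smul, hu, hsymm v u, hcontra]
      · simp [map_smul, hv, hcontra]
      · simp [map_smul]; ring
    have h2 := Fintype.linearIndependent_iff.mp huv ![B v w, -(B u w)] (by
      rw [Fin.sum_univ_two]
      simpa [sub_eq_add_neg] using hd)
    have hvw : B v w = 0 := by simpa using h2 0
    have huw : B u w = 0 := by
      have := h2 1; simpa [neg_eq_zero] using this
    exact hu0 (perp u v w u hspan3 hu hcontra huw)
  -- u, v, p independent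
  have hBpu : B p u = 0 := by rw [← hsymm]; exact hpu
  have hBpv : B p v = 0 := by rw [← hsymm]; exact hpv
  have hind3 : LinearIndependent ℂ ![u, v, p] := by
    rw [Fintype.linearIndependent_iff]
    intro g hg
    rw [Fin.sum_univ_three] at hg
    simp only [Matrix.cons_val_zero, Matrix.cons_val_one, Matrix.head_cons,
      Matrix.cons_val_two, Matrix.tail_cons] at hg
    have e0 : g 0 = 0 := by
      have := congrArg (fun z => B z v) hg
      simp [map_add, map_smul, hv, hBpv, hsymm p v] at this
      rcases this with h | h
      · exact h
      · exact absurd h hBuv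
    have e1 : g 1 = 0 := by
      have := congrArg (fun z => B z u) hg
      simp [map_add, map_smul, hu, hsymm v u, hsymm p u, hBpu, hpu] at this
      rcases this with h | h
      · exact h
      · exact absurd h hBuv
    have e2 : g 2 = 0 := by
      rw [e0, e1, zero_smul, zero_smul, zero_add, zero_add, smul_eq_zero] at hg
      tauto
    intro i; fin_cases i <;> assumption
  have hspan3 : span ℂ (Set.range ![u, v, p]) = ⊤ :=
    hind3.span_eq_top_of_card_eq_finrank (by simp)
  have hspan3' : span ℂ ({u, v, p} : Set (Fin 3 → ℂ)) = ⊤ := by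
    rwa [show Set.range ![u, v, p] = {u, v, p} by
      ext y; simp [Matrix.range_cons, Matrix.range_empty]; tauto] at hspan3
  have hBpp : B p p ≠ 0 := by
    intro hcontra
    exact hp0 (perp u v p p hspan3' hBpu hBpv hcontra)
  -- coordinates for r and s
  obtain ⟨cr, hcr⟩ := mem_span_range_iff_exists_fun ℂ |>.mp
    (show r ∈ span ℂ (Set.range ![u, v, p]) by rw [hspan3]; trivial)
  obtain ⟨cs, hcs⟩ := mem_span_range_iff_exists_fun ℂ |>.mp
    (show s ∈ span ℂ (Set.range ![u, v, p]) by rw [hspan3]; trivial)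
  rw [Fin.sum_univ_three] at hcr hcs
  simp only [Matrix.cons_val_zero, Matrix.cons_val_one, Matrix.head_cons,
    Matrix.cons_val_two, Matrix.tail_cons] at hcr hcs
  set r1 := cr 0; set r2 := cr 1; set r3 := cr 2
  set s1 := cs 0; set s2 := cs 1; set s3 := cs 2
  -- m coordinates
  obtain ⟨a, b, hab⟩ := mem_span_pair.mp hmk
  have ha0 : a ≠ 0 := by
    intro h
    rw [h, zero_smul, zero_add] at hab
    exact (linearIndependent_fin2.mp hmv).2 b (by simpa using hab)
  have hb0 : b ≠ 0 := by
    intro h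
    rw [h, zero_smul, add_zero] at hab
    exact (linearIndependent_fin2.mp hmu).2 a (by simpa using hab)
  -- chord coordinates
  obtain ⟨l, mu, hlm⟩ := mem_span_pair.mp hchord
  -- reflection
  obtain ⟨n, hn0, hnk, al, be, sc, t, hal, hbe, hsc, ht, hh1, hh2⟩ := href
  obtain ⟨n1, n2, hnn⟩ := mem_span_pair.mp hnk
  -- x coordinates
  obtain ⟨rho, tau', hx1e⟩ := mem_span_pair.mp hx1
  obtain ⟨sig, tau, hx2e⟩ := mem_span_pair.mp hx2
  -- coordinate extraction helper
  have hcoords : ∀ g1 g2 g3 : ℂ, g1 • u + g2 • v + g3 • p = 0 → g1 = 0 ∧ g2 = 0 ∧ g3 = 0 := by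
    intro g1 g2 g3 h
    have h' := Fintype.linearIndependent_iff.mp hind3 ![g1, g2, g3] (by
      rw [Fin.sum_univ_three]; simpa using h)
    exact ⟨by simpa using h' 0, by simpa using h' 1, by simpa using h' 2⟩
  -- B r p and B s p
  have hBrp : B r p = r3 * B p p := by
    rw [← hcr]; simp [map_add, map_smul, hpu, hpv]
  -- t = 2 * al * r3
  have hsum : sc • n + t • p = (2 * al) • r := by
    linear_combination (norm := module) hh1 + hh2
  have hBnp : B n p = 0 := by rw [← hnn]; simp [map_add, map_smul, hpu, hpv]
  have h5 := congrArg (fun z => B z p) hsum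
  simp only [map_add, map_smul, LinearMap.add_apply, LinearMap.smul_apply,
    smul_eq_mul, hBnp, hBrp, mul_zero, zero_add] at h5
  have ht2 : t = 2 * al * r3 := by
    have h6 : (t - 2 * al * r3) * B p p = 0 := by linear_combination h5
    rcases mul_eq_zero.mp h6 with h | h
    · exact sub_eq_zero.mp h
    · exact absurd h hBpp
  -- conic relations in coordinates
  have hrC : 2 * r1 * r2 * (B u v) + r3 ^ 2 * (B p p) = 0 := by
    have h7 : B (r1 • u + r2 • v + r3 • p) (r1 • u + r2 • v + r3 • p) = 0 := by
      rw [hcr]; exact hr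
    simp only [map_add, map_smul, LinearMap.add_apply, LinearMap.smul_apply,
      smul_eq_mul, hu, hv, hpu, hpv, hBpu, hBpv, mul_zero, zero_add, add_zero] at h7
    linear_combination h7 + r1 * r2 * (hsymm u v)
  have hsC : 2 * s1 * s2 * (B u v) + s3 ^ 2 * (B p p) = 0 := by
    have h7 : B (s1 • u + s2 • v + s3 • p) (s1 • u + s2 • v + s3 • p) = 0 := by
      rw [hcs]; exact hs
    simp only [map_add, map_smul, LinearMap.add_apply, LinearMap.smul_apply,
      smul_eq_mul, hu, hv, hpu, hpv, hBpu, hBpv, mul_zero, zero_add, add_zero] at h7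
    linear_combination h7 + s1 * s2 * (hsymm u v)
  -- r3 ≠ 0 and s3 ≠ 0
  have hr3 : r3 ≠ 0 := by
    intro h3
    have h8 : r1 * r2 = 0 := by
      have h9 : (r1 * r2) * (2 * B u v) = 0 := by
        linear_combination hrC - r3 * (B p p) * h3
      rcases mul_eq_zero.mp h9 with h | h
      · exact h
      · exfalso; apply hBuv; simpa using h
    rcases mul_eq_zero.mp h8 with h1' | h2'
    · have hrv : LinearIndependent ℂ ![r, v] := by simpa using hdist 0 3 (by decide)
      refine (linearIndependent_fin2.mp hrv).2 r2 ?_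
      show r2 • v = r
      rw [← hcr, h1', h3]; module
    · have hru : LinearIndependent ℂ ![r, u] := by simpa using hdist 0 2 (by decide)
      refine (linearIndependent_fin2.mp hru).2 r1 ?_
      show r1 • u = r
      rw [← hcr, h2', h3]; module
  have hs3 : s3 ≠ 0 := by
    intro h3
    have h8 : s1 * s2 = 0 := by
      have h9 : (s1 * s2) * (2 * B u v) = 0 := by
        linear_combination hsC - s3 * (B p p) * h3
      rcases mul_eq_zero.mp h9 with h | h
      · exact h
      · exfalso; apply hBuv; simpa using h
    rcases mul_eq_zero.mp h8 with h1' | h2'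
    · have hsv : LinearIndependent ℂ ![s, v] := by simpa using hdist 1 3 (by decide)
      refine (linearIndependent_fin2.mp hsv).2 s2 ?_
      show s2 • v = s
      rw [← hcs, h1', h3]; module
    · have hsu : LinearIndependent ℂ ![s, u] := by simpa using hdist 1 2 (by decide)
      refine (linearIndependent_fin2.mp hsu).2 s1 ?_
      show s1 • u = s
      rw [← hcs, h2', h3]; module
  -- coordinates of be • x via r'
  have hbx : be • x = (rho * al) • r - (rho * t) • p + (be * tau') • v := by
    linear_combination (norm := module) (-be) • hx1e + rho • hh2
  have hbx2 : be • x = (be * sig) • s + (be * tau) • u := by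
    linear_combination (norm := module) (-be) • hx2e
  have hveq : (rho * al * r1 - be * sig * s1 - be * tau) • u
      + (rho * al * r2 + be * tau' - be * sig * s2) • v
      + (rho * al * r3 - rho * t - be * sig * s3) • p = 0 := by
    linear_combination (norm := module) (rho * al) • hcr - (be * sig) • hcs - hbx + hbx2
  obtain ⟨E1, E2, E3⟩ := hcoords _ _ _ hveq
  -- chord relations in coordinates
  have hveq2 : (l * r1 + mu * s1 - a) • u + (l * r2 + mu * s2 - b) • v
      + (l * r3 + mu * s3) • p = 0 := by
    linear_combination (norm := module) l • hcr + mu • hcs + hlm - hab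
  obtain ⟨Ha, Hb, H3⟩ := hcoords _ _ _ hveq2
  -- key identity
  have E3' : rho * al * r3 + be * sig * s3 = 0 := by
    linear_combination (-1 : ℂ) * E3 - rho * ht2
  have key : (rho * al * r1 * b - a * (be * sig) * s2) * (2 * (B u v) * s3 ^ 2) = 0 := by
    linear_combination (2 * (B u v) * s3 ^ 2 * (be * sig) * s2) * Ha
      - (2 * (B u v) * s3 ^ 2 * (rho * al) * r1) * Hb
      + (2 * (B u v) * s3 * s2 * (rho * al * r1 - be * sig * s1)) * H3
      + (2 * (B u v) * l * s2 * (r3 * s1 - r1 * s3)) * E3'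
      + (l * (rho * al) * s3 ^ 2) * hrC
      - (l * (rho * al) * r3 ^ 2) * hsC
  have K : rho * al * r1 * b = a * (be * sig) * s2 := by
    rcases mul_eq_zero.mp key with h | h
    · linear_combination h
    · exfalso
      rcases mul_eq_zero.mp h with h' | h'
      · rcases mul_eq_zero.mp h' with h'' | h''
        · simp at h''
        · exact hBuv h''
      · exact hs3 (by simpa [pow_eq_zero_iff] using h')
  -- conclude
  have E1' : be * (sig * s1 + tau) = rho * al * r1 := by linear_combination (-1 : ℂ) * E1
  have V : (sig * s1 + tau) * b = sig * s2 * a :=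
    mul_left_cancel₀ hbe (by linear_combination b * E1' + K)
  refine mem_span_pair.mpr ⟨sig * s3, (sig * s1 + tau) / a, ?_⟩
  rw [← hab, ← hx2e, ← hcs]
  match_scalars <;> field_simp
  linear_combination V
end

section
/- Classical Butterfly Theorem: Let m be the midpoint of a chord ab of a circle in the Euclidean plane. Let rs and uv be two other chords of the circle passing through m. Let p be the intersection of line rv with line ab, and q the intersection of line us with line ab. Then the distance pm equals the distance qm. -/
/-!
Identify the plane with `ℂ` by the similarity sending the chord `ab` to `[-1, 1]`. The circle
becomes `normSq z = 1 + 2γ Im z`, so the power of `0` is `-1` and the chord through `0` starting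
at `r` ends at `s = -1 / conj r`. Consequently the line through `r` and `v = -1 / conj u` meets
the real axis at `Im (conj r * u) / D` with `D = Im r + Im u + 2γ Im r Im u`. Since `D` is
symmetric in `r` and `u` while `Im (conj r * u)` is antisymmetric, exchanging the two chords
gives `q = -p`.
-/

open Complex ComplexConjugate

theorem Collinear.im_conj_map_sub_mul_map_sub {V : Type*} [AddCommGroup V] [Module ℝ V]
    (L : V →ₗ[ℝ] ℂ) {x y z : V} (h : Collinear ℝ ({x, y, z} : Set V)) :
    (conj (L (x - z)) * L (y - z)).im = 0 := by
  obtain ⟨d, hd⟩ := (collinear_iff_of_mem (by simp : z ∈ ({x, y, z} : Set V))).1 h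
  obtain ⟨t, rfl⟩ := hd x (by simp)
  obtain ⟨t', rfl⟩ := hd y (by simp)
  simp only [vadd_eq_add, add_sub_cancel_right, map_smul, real_smul, map_mul, conj_ofReal,
    mul_im, mul_re, ofReal_re, ofReal_im, conj_re, conj_im]
  ring

namespace Butterfly

theorem normSq_eq_of_dist_eq {c z : ℂ} {ρ : ℝ} (h₁ : dist 1 c = ρ) (h₂ : dist (-1) c = ρ)
    (hz : dist z c = ρ) : normSq z = 1 + 2 * c.im * z.im := by
  have key : ∀ w, dist w c = ρ → (w.re - c.re) ^ 2 + (w.im - c.im) ^ 2 = ρ ^ 2 := by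
    rintro w rfl
    rw [Complex.dist_eq, Complex.sq_norm, normSq_apply, sub_re, sub_im]
    ring
  have e₁ := key 1 h₁
  have e₂ := key (-1) h₂
  simp only [one_re, one_im, neg_re, neg_im] at e₁ e₂
  have hc : c.re = 0 := by linear_combination (e₂ - e₁) / 4
  rw [normSq_apply]
  linear_combination key z hz - e₁ + (2 * z.re - 2) * hc

variable {γ : ℝ} {p r s u v : ℂ}

theorem im_ne_zero (hu : normSq u = 1 + 2 * γ * u.im) (h₁ : u ≠ 1) (h₂ : u ≠ -1) : u.im ≠ 0 := by
  intro him
  rw [normSq_apply, him] at hu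
  have : (u.re - 1) * (u.re + 1) = 0 := by linear_combination hu
  rcases mul_eq_zero.1 this with h | h
  · exact h₁ (Complex.ext (by simpa [sub_eq_zero] using h) (by simpa using him))
  · exact h₂ (Complex.ext (by simpa [eq_neg_iff_add_eq_zero] using h) (by simpa using him))

theorem conj_mul_eq_neg_one (hr : normSq r = 1 + 2 * γ * r.im)
    (hs : normSq s = 1 + 2 * γ * s.im) (hrs : r ≠ s) (h : (conj r * s).im = 0) :
    conj r * s = -1 := by
  have hr₀ : normSq r ≠ 0 := by
    intro h₀
    rw [normSq_eq_zero.1 h₀] at hr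
    simp at hr
  set l := (conj r * s).re / normSq r with hl_def
  have hsl : s = l * r := by
    have hw : conj r * s = ((conj r * s).re : ℂ) := Complex.ext (by simp) (by simp [h])
    calc s = (normSq r : ℂ)⁻¹ * (r * conj r * s) := by
          rw [mul_conj, inv_mul_cancel_left₀ (ofReal_ne_zero.2 hr₀)]
      _ = l * r := by rw [mul_assoc, hw, hl_def, ofReal_div]; ring
  have hl : l ≠ 1 := by
    rintro hl
    exact hrs (by rw [hsl, hl, ofReal_one, one_mul])
  rw [hsl, normSq_mul, normSq_ofReal, im_ofReal_mul] at hs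
  have : (l - 1) * (l * normSq r + 1) = 0 := by linear_combination hs - l * hr
  have hlr : l * normSq r = -1 := by
    linear_combination (mul_eq_zero.1 this).resolve_left (sub_ne_zero.2 hl)
  rw [hl_def, div_mul_cancel₀ _ hr₀] at hlr
  exact Complex.ext (by simpa using hlr) (by simp [h])

theorem normSq_mul_eq_neg (huv : conj u * v = -1) : (normSq u : ℂ) * v = -u := by
  rw [← mul_conj, mul_assoc, huv, mul_neg_one]

theorem abscissa_mul_eq (hu : normSq u = 1 + 2 * γ * u.im) (huv : conj u * v = -1)
    (hp : p.im = 0) (hrvp : (conj (r - p) * (v - p)).im = 0) :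
    p.re * (r.im + u.im + 2 * γ * r.im * u.im) = (conj r * u).im := by
  have hv₁ : normSq u * v.re = -u.re := by simpa using congrArg re (normSq_mul_eq_neg huv)
  have hv₂ : normSq u * v.im = -u.im := by simpa using congrArg im (normSq_mul_eq_neg huv)
  simp only [mul_im, conj_re, conj_im, sub_re, sub_im, hp] at hrvp ⊢
  linear_combination normSq u * hrvp - (r.re - p.re) * hv₂ + r.im * hv₁ - r.im * p.re * hu

theorem abscissa_denom_ne_zero (hu : normSq u = 1 + 2 * γ * u.im) (huv : conj u * v = -1)
    (hr : r.im ≠ 0) (hrv : r ≠ v) (hp : p.im = 0) (hrvp : (conj (r - p) * (v - p)).im = 0) :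
    r.im + u.im + 2 * γ * r.im * u.im ≠ 0 := by
  have hv₂ : normSq u * v.im = -u.im := by simpa using congrArg im (normSq_mul_eq_neg huv)
  have hu₀ : normSq u ≠ 0 := by
    intro h₀
    rw [normSq_eq_zero.1 h₀] at huv
    simp at huv
  intro hD
  have hvr : v.im = r.im := by
    have : normSq u * (r.im - v.im) = 0 := by linear_combination hD - hv₂ + r.im * hu
    linarith [(mul_eq_zero.1 this).resolve_left hu₀]
  simp only [mul_im, conj_re, conj_im, sub_re, sub_im, hp, hvr] at hrvp
  have : r.im * (r.re - v.re) = 0 := by linear_combination hrvp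
  exact hrv (Complex.ext (by linarith [(mul_eq_zero.1 this).resolve_left hr]) hvr.symm)

end Butterfly

open Butterfly in
theorem butterfly_unit_chord {c p q r s u v : ℂ} {ρ : ℝ}
    (h₁ : dist 1 c = ρ) (h₂ : dist (-1) c = ρ) (hr : dist r c = ρ) (hs : dist s c = ρ)
    (hu : dist u c = ρ) (hv : dist v c = ρ) (hr₁ : r ≠ 1) (hr₂ : r ≠ -1)
    (hrs : r ≠ s) (huv : u ≠ v) (hrv : r ≠ v)
    (hrs₀ : (conj r * s).im = 0) (huv₀ : (conj u * v).im = 0) (hp : p.im = 0) (hq : q.im = 0)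
    (hrvp : (conj (r - p) * (v - p)).im = 0) (husq : (conj (u - q) * (s - q)).im = 0) :
    p = -q := by
  have circle (z : ℂ) (hz : dist z c = ρ) := normSq_eq_of_dist_eq h₁ h₂ hz
  have hs' := conj_mul_eq_neg_one (circle r hr) (circle s hs) hrs hrs₀
  have hv' := conj_mul_eq_neg_one (circle u hu) (circle v hv) huv huv₀
  have hP := abscissa_mul_eq (circle u hu) hv' hp hrvp
  have hQ := abscissa_mul_eq (circle r hr) hs' hq husq
  have hD := abscissa_denom_ne_zero (circle u hu) hv' (im_ne_zero (circle r hr) hr₁ hr₂)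
    hrv hp hrvp
  refine Complex.ext (mul_right_cancel₀ hD ?_) (by simp [hp, hq])
  simp only [mul_im, conj_re, conj_im, neg_re] at hP hQ ⊢
  linear_combination hP + hQ

noncomputable def chordCoord (a b x : EuclideanSpace ℝ (Fin 2)) : ℂ :=
  orthonormalBasisOneI.repr.symm (x - midpoint ℝ a b) /
    orthonormalBasisOneI.repr.symm (a - midpoint ℝ a b)

section ChordCoord

variable {a b : EuclideanSpace ℝ (Fin 2)}

theorem chordCoord_sub (x y : EuclideanSpace ℝ (Fin 2)) :
    chordCoord a b x - chordCoord a b y = orthonormalBasisOneI.repr.symm (x - y) /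
      orthonormalBasisOneI.repr.symm (a - midpoint ℝ a b) := by
  rw [chordCoord, chordCoord, ← sub_div, ← map_sub, sub_sub_sub_cancel_right]

theorem dist_chordCoord (x y : EuclideanSpace ℝ (Fin 2)) :
    dist (chordCoord a b x) (chordCoord a b y) = dist x y / dist a (midpoint ℝ a b) := by
  rw [Complex.dist_eq, chordCoord_sub, norm_div, LinearIsometryEquiv.norm_map,
    LinearIsometryEquiv.norm_map, dist_eq_norm, dist_eq_norm]

theorem chordCoord_midpoint : chordCoord a b (midpoint ℝ a b) = 0 := by
  simp [chordCoord]

theorem repr_symm_sub_midpoint_ne_zero (hab : a ≠ b) :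
    orthonormalBasisOneI.repr.symm (a - midpoint ℝ a b) ≠ 0 := by
  rwa [map_ne_zero_iff _ (LinearIsometryEquiv.injective _), sub_ne_zero, Ne, left_eq_midpoint_iff]

theorem chordCoord_left (hab : a ≠ b) : chordCoord a b a = 1 :=
  div_self (repr_symm_sub_midpoint_ne_zero hab)

theorem chordCoord_right (hab : a ≠ b) : chordCoord a b b = -1 := by
  rw [chordCoord, right_sub_midpoint, ← neg_sub, smul_neg, ← left_sub_midpoint, map_neg, neg_div,
    div_self (repr_symm_sub_midpoint_ne_zero hab)]

theorem chordCoord_injective (hab : a ≠ b) : Function.Injective (chordCoord a b) := fun x y h => by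
  rw [← sub_eq_zero, chordCoord_sub, div_eq_zero_iff,
    or_iff_left (repr_symm_sub_midpoint_ne_zero hab)] at h
  rwa [map_eq_zero_iff _ (LinearIsometryEquiv.injective _), sub_eq_zero] at h

theorem Collinear.im_conj_chordCoord_sub_mul_sub {x y z : EuclideanSpace ℝ (Fin 2)}
    (h : Collinear ℝ {x, y, z}) :
    (conj (chordCoord a b x - chordCoord a b z) * (chordCoord a b y - chordCoord a b z)).im = 0 := by
  simpa [chordCoord_sub, div_eq_inv_mul] using h.im_conj_map_sub_mul_map_sub
    (LinearMap.mulLeft ℝ (orthonormalBasisOneI.repr.symm (a - midpoint ℝ a b))⁻¹ ∘ₗ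
      orthonormalBasisOneI.repr.symm.toLinearMap)

theorem Collinear.im_chordCoord_eq_zero (hab : a ≠ b) {x : EuclideanSpace ℝ (Fin 2)}
    (h : Collinear ℝ {a, b, x}) : (chordCoord a b x).im = 0 := by
  have := h.im_conj_chordCoord_sub_mul_sub (a := a) (b := b)
  rw [chordCoord_left hab, chordCoord_right hab] at this
  simp only [mul_im, conj_re, conj_im, sub_re, sub_im, one_re, one_im, neg_re, neg_im] at this
  linarith

theorem Collinear.im_conj_chordCoord_mul_eq_zero {x y : EuclideanSpace ℝ (Fin 2)}
    (h : Collinear ℝ {x, y, midpoint ℝ a b}) :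
    (conj (chordCoord a b x) * chordCoord a b y).im = 0 := by
  simpa [chordCoord_midpoint] using h.im_conj_chordCoord_sub_mul_sub (a := a) (b := b)

end ChordCoord

/-- **Classical Butterfly Theorem.**  Let `m` be the midpoint of a chord `ab` of a
circle with centre `o` and radius `ρ` in the Euclidean plane, and let `rs` and `uv`
be two other chords of the circle through `m`.  If `p = rv ∩ ab` and `q = us ∩ ab`,
then `dist p m = dist q m`. -/
theorem butterfly_circle
    (o a b r s u v m p q : EuclideanSpace ℝ (Fin 2)) (ρ : ℝ)
    -- `a, b, r, s, u, v` are pairwise distinct points on the circle :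
    (hdistinct : [a, b, r, s, u, v].Pairwise (· ≠ ·))
    (hac : dist a o = ρ) (hbc : dist b o = ρ)
    (hrc : dist r o = ρ) (hsc : dist s o = ρ)
    (huc : dist u o = ρ) (hvc : dist v o = ρ)
    -- `m` is the midpoint of the chord `ab` :
    (hm : m = midpoint ℝ a b)
    -- the chords `rs` and `uv` pass through `m` :
    (hrs : Collinear ℝ ({r, s, m} : Set (EuclideanSpace ℝ (Fin 2))))
    (huv : Collinear ℝ ({u, v, m} : Set (EuclideanSpace ℝ (Fin 2))))
    -- `p` is the intersection of line `rv` with line `ab` :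
    (hp1 : Collinear ℝ ({r, v, p} : Set (EuclideanSpace ℝ (Fin 2))))
    (hp2 : Collinear ℝ ({a, b, p} : Set (EuclideanSpace ℝ (Fin 2))))
    -- `q` is the intersection of line `us` with line `ab` :
    (hq1 : Collinear ℝ ({u, s, q} : Set (EuclideanSpace ℝ (Fin 2))))
    (hq2 : Collinear ℝ ({a, b, q} : Set (EuclideanSpace ℝ (Fin 2)))) :
    dist p m = dist q m := by
  subst hm
  simp only [List.pairwise_cons, List.mem_cons, List.not_mem_nil, or_false, forall_eq_or_imp,
    forall_eq, List.Pairwise.nil] at hdistinct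
  obtain ⟨⟨hab, har, -, -, -⟩, ⟨hbr, -, -, -⟩, ⟨hrs_ne, -, hrv⟩, -, huv_ne, -⟩ := hdistinct
  have hC (x : EuclideanSpace ℝ (Fin 2)) (hx : dist x o = ρ) :
      dist (chordCoord a b x) (chordCoord a b o) = ρ / dist a (midpoint ℝ a b) := by
    rw [dist_chordCoord, hx]
  have hCne {x y : EuclideanSpace ℝ (Fin 2)} (h : x ≠ y) := (chordCoord_injective hab).ne h
  have hpq := butterfly_unit_chord (chordCoord_left hab ▸ hC a hac)
    (chordCoord_right hab ▸ hC b hbc) (hC r hrc) (hC s hsc) (hC u huc) (hC v hvc)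
    (chordCoord_left hab ▸ hCne har.symm) (chordCoord_right hab ▸ hCne hbr.symm)
    (hCne hrs_ne) (hCne huv_ne) (hCne hrv)
    hrs.im_conj_chordCoord_mul_eq_zero huv.im_conj_chordCoord_mul_eq_zero
    (hp2.im_chordCoord_eq_zero hab) (hq2.im_chordCoord_eq_zero hab)
    hp1.im_conj_chordCoord_sub_mul_sub hq1.im_conj_chordCoord_sub_mul_sub
  have had : dist a (midpoint ℝ a b) ≠ 0 := dist_ne_zero.2 (by rwa [Ne, left_eq_midpoint_iff])
  rw [← div_left_inj' had, ← dist_chordCoord, ← dist_chordCoord, chordCoord_midpoint, hpq,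
    dist_zero_right, dist_zero_right, norm_neg]
end
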